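/- arXiv:2502.07157 — 8 statements merged into one kernel-verified Lean document; each statement's English description precedes it below -/
import Mathlib

section
/- Let $G$ be a finite abelian $p$-group of exponent $p^e$ with $p^i$-ranks $r_i(G)$. For a positive integer $n$, one has $\sum_{i=1}^{e}\left(\lfloor (n-1)/p^{i-1}\rfloor - \lfloor (n-1)/p^{i}\rfloor\right) r_i(G) = \sum_{i=1}^{e}\left(\lfloor (n-2)/p^{i-1}\rfloor - \lfloor (n-2)/p^{i}\rfloor\right) r_i(G)$ if and only if $p^e$ divides $n-1$. -/
/-- For a finite abelian `p`-group of exponent `p^e` with `pⁱ`-ranks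
`r i ≥ 1` for `1 ≤ i ≤ e`, the two weighted sums of floor differences at `n-1` and `n-2`
agree if and only if `p^e ∣ n - 1`. -/
theorem sum_floor_diff_eq_iff_dvd
    (p : ℕ) (hp : p.Prime) (e : ℕ) (he : 1 ≤ e)
    (r : ℕ → ℕ) (hr : ∀ i ∈ Finset.Icc 1 e, 1 ≤ r i)
    (n : ℕ) (hn : 1 ≤ n) :
    (∑ i ∈ Finset.Icc 1 e, ((n - 1) / p ^ (i - 1) - (n - 1) / p ^ i) * r i
      = ∑ i ∈ Finset.Icc 1 e, ((n - 2) / p ^ (i - 1) - (n - 2) / p ^ i) * r i)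
      ↔ p ^ e ∣ (n - 1) := by
  rcases Nat.lt_or_ge n 2 with h2 | h2
  · interval_cases n
    simp
  · obtain ⟨k, rfl⟩ : ∃ k, n = k + 2 := ⟨n - 2, by omega⟩
    have h1 : k + 2 - 1 = k + 1 := rfl
    have h2' : k + 2 - 2 = k := rfl
    rw [h1, h2']
    have key : ∀ i ∈ Finset.Icc 1 e,
        ((k + 1) / p ^ (i - 1) - (k + 1) / p ^ i) * r i
        = (k / p ^ (i - 1) - k / p ^ i) * r i
          + (((if p ^ (i - 1) ∣ k + 1 then 1 else 0)
              - (if p ^ i ∣ k + 1 then 1 else 0)) * r i) := by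
      intro i hi
      have hs : (k + 1) / p ^ (i - 1) - (k + 1) / p ^ i
          = (k / p ^ (i - 1) - k / p ^ i)
            + ((if p ^ (i - 1) ∣ k + 1 then 1 else 0)
               - (if p ^ i ∣ k + 1 then 1 else 0)) := by
        rw [Nat.succ_div, Nat.succ_div]
        have hmono : k / p ^ i ≤ k / p ^ (i - 1) :=
          Nat.div_le_div_left (pow_le_pow_right₀ hp.one_le (by omega))
            (pow_pos hp.pos _)
        have hdvd : (if p ^ i ∣ k + 1 then (1 : ℕ) else 0)
            ≤ (if p ^ (i - 1) ∣ k + 1 then (1 : ℕ) else 0) := by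
          split_ifs with h h'
          · exact le_refl 1
          · exact absurd (dvd_trans (pow_dvd_pow p (by omega)) h) h'
          · omega
          · omega
        set c := (if p ^ (i - 1) ∣ k + 1 then (1 : ℕ) else 0) with hc
        set d := (if p ^ i ∣ k + 1 then (1 : ℕ) else 0) with hd
        omega
      rw [hs, Nat.add_mul]
    rw [Finset.sum_congr rfl key, Finset.sum_add_distrib, add_eq_left,
      Finset.sum_eq_zero_iff]
    constructor
    · intro h
      have main : ∀ j, j ≤ e → p ^ j ∣ k + 1 := by
        intro j
        induction j with
        | zero => simp
        | succ j ih =>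
          intro hj
          have hdj := ih (by omega)
          have hmem : j + 1 ∈ Finset.Icc 1 e := Finset.mem_Icc.mpr ⟨by omega, hj⟩
          have hterm := h (j + 1) hmem
          have hr1 := hr (j + 1) hmem
          simp only [Nat.add_sub_cancel] at hterm
          rw [if_pos hdj] at hterm
          by_contra hnd
          rw [if_neg hnd] at hterm
          omega
      exact main e le_rfl
    · intro h i hi
      obtain ⟨hi1, hi2⟩ := Finset.mem_Icc.mp hi
      have ha : p ^ (i - 1) ∣ k + 1 := dvd_trans (pow_dvd_pow p (by omega)) h
      have hb : p ^ i ∣ k + 1 := dvd_trans (pow_dvd_pow p hi2) h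
      simp [ha, hb]
end

section
/- Let $p$ be a prime and $G$ a finite abelian $p$-group of exponent $p^e$ with $p^i$-ranks $r_i(G)$. When $n$ runs over positive integers $\geq 2$ with $p^e \nmid (n-1)$, the quantity $\frac{1+\sum_{i\ge1}(\lfloor (n-1)/p^{i-1}\rfloor - \lfloor (n-1)/p^i\rfloor) r_i(G)}{n-1}$ attains its maximum value $1 + r_1(G)$, and this maximum is attained only at $n=2$. -/
lemma tele_sum_aux (a : ℕ → ℕ) (ha : ∀ i, a (i + 1) ≤ a i) (e : ℕ) :
    ∑ i ∈ Finset.Icc 1 e, (a (i - 1) - a i) = a 0 - a e := by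
  induction e with
  | zero => simp
  | succ k ih =>
    have hk : a k ≤ a 0 := by
      clear ih
      induction k with
      | zero => exact le_refl _
      | succ j ihj => exact (ha j).trans ihj
    rw [Finset.sum_Icc_succ_top (by omega), ih]
    have := ha k
    simp only [Nat.add_sub_cancel]
    omega

/-- Let `G` be a finite abelian `p`-group of exponent `p^e` with
`pⁱ`-ranks `r 1 ≥ ⋯ ≥ r e ≥ 1` (`r i = 0` for `i > e`).  When `n` runs over integers
`≥ 2` with `p^e ∤ (n-1)`, the quantity
`(1 + ∑ᵢ (⌊(n-1)/p^(i-1)⌋ - ⌊(n-1)/pⁱ⌋) r i)/(n-1)` is at most `1 + r 1`, and equals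
`1 + r 1` exactly when `n = 2`. -/
theorem artin_schreier_conductor_max
    (p : ℕ) (hp : p.Prime) (e : ℕ) (he : 1 ≤ e)
    (r : ℕ → ℕ)
    (hdec : ∀ i, 1 ≤ i → i < e → r (i + 1) ≤ r i)
    (hre : 1 ≤ r e)
    (n : ℕ) (hn : 2 ≤ n) (hnd : ¬ p ^ e ∣ (n - 1)) :
    ((1 + ∑ i ∈ Finset.Icc 1 e,
        (((n - 1) / p ^ (i - 1) - (n - 1) / p ^ i : ℕ) : ℚ) * r i) / (n - 1 : ℚ)
      ≤ 1 + r 1)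
    ∧ (((1 + ∑ i ∈ Finset.Icc 1 e,
        (((n - 1) / p ^ (i - 1) - (n - 1) / p ^ i : ℕ) : ℚ) * r i) / (n - 1 : ℚ)
      = 1 + r 1) ↔ n = 2) := by
  have hp2 : 2 ≤ p := hp.two_le
  set m := n - 1 with hm
  have hm1 : 1 ≤ m := by omega
  -- r i ≤ r 1 for 1 ≤ i ≤ e
  have hr1 : ∀ i, 1 ≤ i → i ≤ e → r i ≤ r 1 := by
    intro i
    induction i with
    | zero => omega
    | succ k ih =>
      intro h1 h2
      rcases Nat.eq_zero_or_pos k with hk | hk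
      · subst hk; exact le_refl _
      · exact (hdec k hk (by omega)).trans (ih hk (by omega))
  have ha : ∀ i, m / p ^ (i + 1) ≤ m / p ^ i :=
    fun i => Nat.div_le_div_left (Nat.pow_le_pow_right (by omega) (by omega)) (by positivity)
  -- key natural-number bound
  have hSle : ∑ i ∈ Finset.Icc 1 e, (m / p ^ (i - 1) - m / p ^ i) * r i ≤ r 1 * m := by
    calc ∑ i ∈ Finset.Icc 1 e, (m / p ^ (i - 1) - m / p ^ i) * r i
        ≤ ∑ i ∈ Finset.Icc 1 e, (m / p ^ (i - 1) - m / p ^ i) * r 1 := by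
          refine Finset.sum_le_sum fun i hi => Nat.mul_le_mul_left _ ?_
          rw [Finset.mem_Icc] at hi
          exact hr1 i hi.1 hi.2
      _ = (m / p ^ 0 - m / p ^ e) * r 1 := by
          rw [← Finset.sum_mul, tele_sum_aux (fun i => m / p ^ i) ha e]
      _ ≤ m * r 1 := Nat.mul_le_mul_right _ (by simp [Nat.sub_le])
      _ = r 1 * m := Nat.mul_comm _ _
  -- cast facts
  have hden : (n - 1 : ℚ) = ((m : ℕ) : ℚ) := by
    rw [hm]; push_cast [Nat.cast_sub (by omega : 1 ≤ n)]; ring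
  have hmQ : (0 : ℚ) < ((m : ℕ) : ℚ) := by exact_mod_cast hm1
  have hsumcast : ∑ i ∈ Finset.Icc 1 e, ((m / p ^ (i - 1) - m / p ^ i : ℕ) : ℚ) * r i
      = ((∑ i ∈ Finset.Icc 1 e, (m / p ^ (i - 1) - m / p ^ i) * r i : ℕ) : ℚ) := by
    push_cast
    rfl
  constructor
  · rw [hden, div_le_iff₀ hmQ, hsumcast]
    have : 1 + (∑ i ∈ Finset.Icc 1 e, (m / p ^ (i - 1) - m / p ^ i) * r i) ≤ (1 + r 1) * m := by
      have : (1 + r 1) * m = m + r 1 * m := by ring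
      omega
    calc (1 : ℚ) + ((∑ i ∈ Finset.Icc 1 e, (m / p ^ (i - 1) - m / p ^ i) * r i : ℕ) : ℚ)
        ≤ (((1 + r 1) * m : ℕ) : ℚ) := by exact_mod_cast this
      _ = (1 + (r 1 : ℚ)) * ((m : ℕ) : ℚ) := by push_cast; ring
  · constructor
    · intro heq
      rw [hden, div_eq_iff (ne_of_gt hmQ), hsumcast] at heq
      have heqN : 1 + (∑ i ∈ Finset.Icc 1 e, (m / p ^ (i - 1) - m / p ^ i) * r i)
          = (1 + r 1) * m := by
        have : ((1 + (∑ i ∈ Finset.Icc 1 e, (m / p ^ (i - 1) - m / p ^ i) * r i) : ℕ) : ℚ)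
            = (((1 + r 1) * m : ℕ) : ℚ) := by push_cast; rw [hsumcast]; exact_mod_cast heq
        exact_mod_cast this
      have hx : (1 + r 1) * m = m + r 1 * m := by ring
      omega
    · intro hn2
      subst hn2
      have hm' : m = 1 := by omega
      have hsum : ∑ i ∈ Finset.Icc 1 e, ((m / p ^ (i - 1) - m / p ^ i : ℕ) : ℚ) * r i
          = (r 1 : ℚ) := by
        rw [Finset.sum_eq_single 1]
        · have h2 : m / p = 0 := Nat.div_eq_of_lt (by omega)
          simp [hm', h2, Nat.div_eq_of_lt (by omega : 1 < p)]
        · intro i hi hne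
          rw [Finset.mem_Icc] at hi
          have hi2 : 2 ≤ i := by omega
          have hlt : m < p ^ (i - 1) := by
            calc m = 1 := hm'
              _ < p ^ (i - 1) := Nat.one_lt_pow (by omega) (by omega)
          have hlt' : m < p ^ i :=
            lt_of_lt_of_le hlt (Nat.pow_le_pow_right (by omega) (by omega))
          simp [Nat.div_eq_of_lt hlt, Nat.div_eq_of_lt hlt']
        · intro h
          exact absurd (Finset.mem_Icc.mpr ⟨le_refl 1, he⟩) h
      rw [hsum, hden, hm']
      norm_num
end

section
/- Let $p$ be a prime, $r \geq 2$ an integer, and set $a := \frac{1+r(p-1)}{p(p^r-1)}$. For integers $s \geq 1$, $r = r_1 > r_2 > \cdots > r_s > r_{s+1} \geq 0$ with $r - r_{s+1} \geq 2$, and $j_1 > j_2 > \cdots > j_s \geq 1$ with $p \nmid j_i$ for all $i$, the quantity $\alpha := \frac{1+\sum_{i=1}^{s}(r_i-r_{i+1})j_i - \sum_{i=1}^{s}(r_i-r_{i+1})\lfloor j_i/p\rfloor}{\sum_{i=1}^{s}(j_i+1)(p^{r_i}-p^{r_{i+1}})}$ satisfies $\alpha \leq a$, with equality exactly when $r_{s+1}=0$,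 $s=1$, and $j_1 = p-1$. -/
set_option maxHeartbeats 1000000

open Finset

def TTd (P : ℚ) (r l : ℕ) : ℚ :=
  (1 + (r : ℚ) * (P - 1)) * (P ^ r - P ^ l) - (P - 1) * (P ^ r - 1) * ((r : ℚ) - (l : ℚ))

lemma abel_q (f g : ℕ → ℚ) : ∀ n : ℕ,
    ∑ i ∈ Icc 1 (n + 1), f i * (g (i + 1) - g i)
      = f (n + 1) * g (n + 1 + 1) - f 1 * g 1
        + ∑ i ∈ Icc 1 n, (f i - f (i + 1)) * g (i + 1) := by
  intro n
  induction n with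
  | zero => simp; ring
  | succ n ih =>
      rw [Finset.sum_Icc_succ_top (by omega : 1 ≤ n + 1 + 1), ih,
          Finset.sum_Icc_succ_top (by omega : 1 ≤ n + 1)]
      ring

lemma pow_lb (P : ℚ) (hP : 2 ≤ P) (n : ℕ) : 1 + (n : ℚ) * (P - 1) ≤ P ^ n := by
  have h := one_add_mul_le_pow (by linarith : (-2 : ℚ) ≤ P - 1) n
  have h2 : (1 : ℚ) + (P - 1) = P := by ring
  rwa [h2] at h

lemma one_le_powq (P : ℚ) (hP : 2 ≤ P) (n : ℕ) : (1 : ℚ) ≤ P ^ n :=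
  one_le_pow₀ (by linarith)

lemma TTd_pos (P : ℚ) (hP : 2 ≤ P) (r l : ℕ) (hl : l < r) : 0 < TTd P r l := by
  obtain ⟨n, rfl⟩ : ∃ n, r = l + (n + 1) := ⟨r - l - 1, by omega⟩
  have hX : (1 : ℚ) ≤ P ^ l := one_le_powq P hP l
  have hY : 1 + ((n : ℚ) + 1) * (P - 1) ≤ P ^ (n + 1) := by
    have := pow_lb P hP (n + 1); push_cast at this ⊢; linarith
  have hsplit : P ^ (l + (n + 1)) = P ^ l * P ^ (n + 1) := pow_add P l (n + 1)
  unfold TTd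
  rw [hsplit]
  push_cast
  nlinarith [mul_le_mul_of_nonneg_left hY (by linarith : (0:ℚ) ≤ P ^ l),
    mul_nonneg (mul_nonneg (by positivity : (0:ℚ) ≤ (l:ℚ)) (by linarith : (0:ℚ) ≤ P - 1))
      (mul_nonneg (by linarith : (0:ℚ) ≤ P ^ l) (by nlinarith : (0:ℚ) ≤ P ^ (n+1) - 1))]

lemma TTd_big (P : ℚ) (hP : 2 ≤ P) (r l : ℕ) (h1 : 1 ≤ l) (h2 : l + 2 ≤ r) :
    P ^ r - 1 < TTd P r l := by
  obtain ⟨n, rfl⟩ : ∃ n, r = l + n + 2 := ⟨r - l - 2, by omega⟩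
  have hX : (1 : ℚ) ≤ P ^ l := one_le_powq P hP l
  have hZ : (1 : ℚ) ≤ P ^ n := one_le_powq P hP n
  have h2n : (n : ℚ) + 2 ≤ 2 * P ^ n := by
    have : (n : ℚ) + 1 ≤ P ^ n := by
      calc (n : ℚ) + 1 ≤ 2 ^ n := by exact_mod_cast Nat.lt_two_pow_self (n := n)
        _ ≤ P ^ n := pow_le_pow_left₀ (by norm_num) hP n
    linarith
  have hPl : P ^ l ≤ P ^ (l + n) := by gcongr <;> [linarith; omega]
  have hsplit : P ^ (l + n + 2) = P ^ l * P ^ n * P ^ 2 := by rw [pow_add, pow_add]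
  have hln : P ^ (l + n) = P ^ l * P ^ n := pow_add P l n
  have hl1 : P ≤ 1 + (l : ℚ) * (P - 1) := by
    have : (1 : ℚ) ≤ (l : ℚ) := by exact_mod_cast h1
    nlinarith
  have hcube : 0 ≤ P ^ 3 - P ^ 2 - 3 * P + 2 := by nlinarith
  unfold TTd
  rw [hsplit]
  push_cast
  nlinarith [mul_le_mul_of_nonneg_right h2n (by nlinarith : (0:ℚ) ≤ (P - 1) * P ^ l),
    mul_le_mul_of_nonneg_left hPl (by linarith : (0:ℚ) ≤ P),
    mul_nonneg (mul_nonneg (by linarith : (0:ℚ) ≤ P^l) (by linarith : (0:ℚ) ≤ P^n)) hcube,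
    mul_le_mul_of_nonneg_right (hl1) (by nlinarith : (0:ℚ) ≤ P^l * P^n * P^2 - P^l),
    mul_pos (by linarith : (0:ℚ) < P ^ l) (by linarith : (0:ℚ) < P ^ n)]

lemma TTd_top (P : ℚ) (r : ℕ) : TTd P r r = 0 := by unfold TTd; ring

lemma TTd_zero (P : ℚ) (r : ℕ) : TTd P r 0 = P ^ r - 1 := by
  unfold TTd; rw [pow_zero]; push_cast; ring

/-- Let `p` be a prime, `r ≥ 2`, `a = (1 + r(p-1))/(p(p^r - 1))`.  For
`s ≥ 1`, a strictly decreasing chain `r = rr 1 > rr 2 > ⋯ > rr s > rr (s+1) ≥ 0` with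
`r - rr (s+1) ≥ 2`, and `j 1 > ⋯ > j s ≥ 1` with `p ∤ j i`, the quantity
`α = (1 + ∑(rr i - rr (i+1)) j i - ∑(rr i - rr (i+1)) ⌊j i/p⌋)
      / (∑(j i + 1)(p^(rr i) - p^(rr (i+1))))`
satisfies `α ≤ a`, with equality exactly when `rr (s+1) = 0`, `s = 1` and `j 1 = p - 1`. -/
theorem disc_exponent_max
    (p : ℕ) (hp : p.Prime) (r : ℕ) (hr : 2 ≤ r)
    (s : ℕ) (hs : 1 ≤ s)
    (rr : ℕ → ℕ) (hrr1 : rr 1 = r)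
    (hrrdec : ∀ i, 1 ≤ i → i ≤ s → rr (i + 1) < rr i)
    (hu : 2 ≤ r - rr (s + 1))
    (j : ℕ → ℕ)
    (hjdec : ∀ i, 1 ≤ i → i < s → j (i + 1) < j i)
    (hjs : 1 ≤ j s)
    (hjp : ∀ i, 1 ≤ i → i ≤ s → ¬ p ∣ j i) :
    ((1 + ∑ i ∈ Finset.Icc 1 s, ((rr i - rr (i + 1) : ℕ) : ℚ) * j i
        - ∑ i ∈ Finset.Icc 1 s, ((rr i - rr (i + 1) : ℕ) : ℚ) * ((j i / p : ℕ) : ℚ))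
      / (∑ i ∈ Finset.Icc 1 s,
          ((j i : ℚ) + 1) * ((p ^ rr i - p ^ rr (i + 1) : ℕ) : ℚ))
      ≤ (1 + r * (p - 1 : ℚ)) / (p * ((p : ℚ) ^ r - 1)))
    ∧ (((1 + ∑ i ∈ Finset.Icc 1 s, ((rr i - rr (i + 1) : ℕ) : ℚ) * j i
        - ∑ i ∈ Finset.Icc 1 s, ((rr i - rr (i + 1) : ℕ) : ℚ) * ((j i / p : ℕ) : ℚ))
      / (∑ i ∈ Finset.Icc 1 s,
          ((j i : ℚ) + 1) * ((p ^ rr i - p ^ rr (i + 1) : ℕ) : ℚ))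
      = (1 + r * (p - 1 : ℚ)) / (p * ((p : ℚ) ^ r - 1)))
      ↔ (rr (s + 1) = 0 ∧ s = 1 ∧ j 1 = p - 1)) := by
  obtain ⟨n, rfl⟩ : ∃ n, s = n + 1 := ⟨s - 1, by omega⟩
  have hp2 : 2 ≤ p := hp.two_le
  have hP2 : (2:ℚ) ≤ (p:ℚ) := by exact_mod_cast hp2
  have hP1 : (1:ℚ) < (p:ℚ) := by linarith
  have hPr1 : (1:ℚ) < (p:ℚ) ^ r := one_lt_pow₀ hP1 (by omega)
  have hA : (0:ℚ) < (p:ℚ) * ((p:ℚ)^r - 1) := by nlinarith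
  -- chain monotonicity
  have hrr_le : ∀ a b : ℕ, 1 ≤ a → a ≤ b → b ≤ n + 1 + 1 → rr b ≤ rr a := by
    intro a b ha hab
    induction b, hab using Nat.le_induction with
    | base => intro _; exact le_rfl
    | succ m hm ih =>
      intro hms
      have h1 : rr (m + 1) < rr m := hrrdec m (by omega) (by omega)
      have h2 := ih (by omega)
      omega
  have hj_le : ∀ a b : ℕ, 1 ≤ a → a ≤ b → b ≤ n + 1 → j b ≤ j a := by
    intro a b ha hab
    induction b, hab using Nat.le_induction with
    | base => intro _; exact le_rfl
    | succ m hm ih =>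
      intro hms
      have h1 : j (m + 1) < j m := hjdec m (by omega) (by omega)
      have h2 := ih (by omega)
      omega
  have hrr_lt_r : ∀ b, 2 ≤ b → b ≤ n + 1 + 1 → rr b < r := by
    intro b h2b hbs
    have h1 : rr b ≤ rr 2 := hrr_le 2 b (by omega) h2b hbs
    have h2 : rr 2 < rr 1 := hrrdec 1 le_rfl (by omega)
    omega
  have hjge : ∀ i, 1 ≤ i → i ≤ n + 1 → 1 ≤ j i := fun i h1 h2 =>
    le_trans hjs (hj_le i (n + 1) h1 h2 le_rfl)
  have hmod1 : ∀ i, 1 ≤ i → i ≤ n + 1 → 1 ≤ j i % p := by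
    intro i h1 h2
    by_contra h
    exact hjp i h1 h2 (Nat.dvd_of_mod_eq_zero (by omega))
  have hmodlt : ∀ i : ℕ, j i % p < p := fun i => Nat.mod_lt _ (by omega)
  -- abbreviations
  set N : ℚ := 1 + ∑ i ∈ Finset.Icc 1 (n + 1), ((rr i - rr (i + 1) : ℕ) : ℚ) * j i
        - ∑ i ∈ Finset.Icc 1 (n + 1), ((rr i - rr (i + 1) : ℕ) : ℚ) * ((j i / p : ℕ) : ℚ)
    with hNdef
  set D : ℚ := ∑ i ∈ Finset.Icc 1 (n + 1),
          ((j i : ℚ) + 1) * ((p ^ rr i - p ^ rr (i + 1) : ℕ) : ℚ) with hDdef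
  have hDpos : 0 < D := by
    rw [hDdef]
    refine Finset.sum_pos ?_ ⟨1, by simp⟩
    intro i hi
    simp only [Finset.mem_Icc] at hi
    have h1 : rr (i + 1) < rr i := hrrdec i hi.1 hi.2
    have hpow : p ^ rr (i + 1) < p ^ rr i := Nat.pow_lt_pow_right hp.one_lt h1
    have h2 : (0:ℚ) < ((p ^ rr i - p ^ rr (i + 1) : ℕ) : ℚ) := by
      exact_mod_cast Nat.sub_pos_of_lt hpow
    have h3 : (0:ℚ) < (j i : ℚ) + 1 := by positivity
    exact mul_pos h3 h2
  -- the key algebraic identity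
  have hkey : (1 + (r:ℚ) * ((p:ℚ) - 1)) * D - ((p:ℚ) * ((p:ℚ)^r - 1)) * N
      = ((j (n + 1) : ℚ) + 1) * TTd (p:ℚ) r (rr (n + 1 + 1))
        + (∑ i ∈ Finset.Icc 1 n, ((j i : ℚ) - (j (i + 1) : ℚ)) * TTd (p:ℚ) r (rr (i + 1)))
        + ((p:ℚ)^r - 1) * (∑ i ∈ Finset.Icc 1 (n + 1),
            ((rr i : ℚ) - (rr (i + 1) : ℚ)) * ((p:ℚ) - 1 - ((j i % p : ℕ) : ℚ)))
        - (p:ℚ) * ((p:ℚ)^r - 1) := by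
    have e1 : ∀ i ∈ Finset.Icc 1 (n + 1),
        (1 + (r:ℚ) * ((p:ℚ) - 1)) * (((j i : ℚ) + 1) * ((p ^ rr i - p ^ rr (i + 1) : ℕ) : ℚ))
          - ((p:ℚ) * ((p:ℚ)^r - 1)) * (((rr i - rr (i + 1) : ℕ) : ℚ) * (j i : ℚ))
          + ((p:ℚ) * ((p:ℚ)^r - 1)) * (((rr i - rr (i + 1) : ℕ) : ℚ) * ((j i / p : ℕ) : ℚ))
        = (((j i : ℚ) + 1) * (TTd (p:ℚ) r (rr (i + 1)) - TTd (p:ℚ) r (rr i)))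
          + ((p:ℚ)^r - 1) * (((rr i : ℚ) - (rr (i + 1) : ℚ)) * ((p:ℚ) - 1 - ((j i % p : ℕ) : ℚ))) := by
      intro i hi
      simp only [Finset.mem_Icc] at hi
      have h1 : rr (i + 1) < rr i := hrrdec i hi.1 hi.2
      have hd : ((rr i - rr (i + 1) : ℕ) : ℚ) = (rr i : ℚ) - (rr (i + 1) : ℚ) :=
        Nat.cast_sub h1.le
      have hpow : p ^ rr (i + 1) ≤ p ^ rr i := Nat.pow_le_pow_right (by omega) h1.le
      have hDel : ((p ^ rr i - p ^ rr (i + 1) : ℕ) : ℚ) = (p:ℚ) ^ rr i - (p:ℚ) ^ rr (i + 1) := by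
        rw [Nat.cast_sub hpow]; push_cast; ring
      have hjq : (j i : ℚ) = (p:ℚ) * ((j i / p : ℕ) : ℚ) + ((j i % p : ℕ) : ℚ) := by
        exact_mod_cast (Nat.div_add_mod (j i) p).symm
      rw [hd, hDel, hjq]
      unfold TTd
      push_cast
      ring
    have e2 : (1 + (r:ℚ) * ((p:ℚ) - 1)) * D - ((p:ℚ) * ((p:ℚ)^r - 1)) * N
        = (∑ i ∈ Finset.Icc 1 (n + 1),
            ((1 + (r:ℚ) * ((p:ℚ) - 1)) * (((j i : ℚ) + 1) * ((p ^ rr i - p ^ rr (i + 1) : ℕ) : ℚ))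
              - ((p:ℚ) * ((p:ℚ)^r - 1)) * (((rr i - rr (i + 1) : ℕ) : ℚ) * (j i : ℚ))
              + ((p:ℚ) * ((p:ℚ)^r - 1)) * (((rr i - rr (i + 1) : ℕ) : ℚ) * ((j i / p : ℕ) : ℚ))))
          - (p:ℚ) * ((p:ℚ)^r - 1) := by
      rw [hNdef, hDdef, Finset.sum_add_distrib, Finset.sum_sub_distrib,
        ← Finset.mul_sum, ← Finset.mul_sum, ← Finset.mul_sum]
      ring
    rw [e2, Finset.sum_congr rfl e1, Finset.sum_add_distrib]
    have habel := abel_q (fun i => (j i : ℚ) + 1) (fun i => TTd (p:ℚ) r (rr i)) n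
    rw [habel, hrr1, TTd_top]
    have e3 : ∑ i ∈ Finset.Icc 1 n, (((j i : ℚ) + 1) - ((j (i + 1) : ℚ) + 1)) * TTd (p:ℚ) r (rr (i + 1))
        = ∑ i ∈ Finset.Icc 1 n, ((j i : ℚ) - (j (i + 1) : ℚ)) * TTd (p:ℚ) r (rr (i + 1)) := by
      apply Finset.sum_congr rfl; intro i _; ring
    rw [e3, ← Finset.mul_sum]
    ring
  -- notation for the pieces
  set Tm : ℚ := TTd (p:ℚ) r (rr (n + 1 + 1)) with hTmdef
  set MID : ℚ := ∑ i ∈ Finset.Icc 1 n, ((j i : ℚ) - (j (i + 1) : ℚ)) * TTd (p:ℚ) r (rr (i + 1))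
    with hMIDdef
  set St : ℚ := ∑ i ∈ Finset.Icc 1 (n + 1),
      ((rr i : ℚ) - (rr (i + 1) : ℚ)) * ((p:ℚ) - 1 - ((j i % p : ℕ) : ℚ)) with hStdef
  have hMIDterm : ∀ i ∈ Finset.Icc 1 n,
      (0:ℚ) ≤ ((j i : ℚ) - (j (i + 1) : ℚ)) * TTd (p:ℚ) r (rr (i + 1)) := by
    intro i hi
    simp only [Finset.mem_Icc] at hi
    have h1 : j (i + 1) < j i := hjdec i hi.1 (by omega)
    have h2 : rr (i + 1) < r := hrr_lt_r (i + 1) (by omega) (by omega)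
    have h3 : (0:ℚ) < TTd (p:ℚ) r (rr (i + 1)) := TTd_pos _ hP2 _ _ h2
    have h4 : (0:ℚ) ≤ (j i : ℚ) - (j (i + 1) : ℚ) := by
      have : (j (i + 1) : ℚ) ≤ (j i : ℚ) := by exact_mod_cast h1.le
      linarith
    positivity
  have hMID : 0 ≤ MID := by
    rw [hMIDdef]; exact Finset.sum_nonneg hMIDterm
  have hStterm : ∀ i ∈ Finset.Icc 1 (n + 1),
      (0:ℚ) ≤ ((rr i : ℚ) - (rr (i + 1) : ℚ)) * ((p:ℚ) - 1 - ((j i % p : ℕ) : ℚ)) := by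
    intro i hi
    simp only [Finset.mem_Icc] at hi
    have h1 : rr (i + 1) < rr i := hrrdec i hi.1 hi.2
    have h2 : (0:ℚ) ≤ (rr i : ℚ) - (rr (i + 1) : ℚ) := by
      have : (rr (i + 1) : ℚ) ≤ (rr i : ℚ) := by exact_mod_cast h1.le
      linarith
    have h3 : (0:ℚ) ≤ (p:ℚ) - 1 - ((j i % p : ℕ) : ℚ) := by
      have : ((j i % p : ℕ) : ℚ) + 1 ≤ (p:ℚ) := by exact_mod_cast hmodlt i
      linarith
    positivity
  have hSt_ge : ((rr (n + 1) : ℚ) - (rr (n + 1 + 1) : ℚ))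
      * ((p:ℚ) - 1 - ((j (n + 1) % p : ℕ) : ℚ)) ≤ St := by
    rw [hStdef]
    exact Finset.single_le_sum hStterm (by simp)
  have hds : (1:ℚ) ≤ (rr (n + 1) : ℚ) - (rr (n + 1 + 1) : ℚ) := by
    have h1 : rr (n + 1 + 1) + 1 ≤ rr (n + 1) := hrrdec (n + 1) (by omega) (by omega)
    have : ((rr (n + 1 + 1) : ℚ)) + 1 ≤ (rr (n + 1) : ℚ) := by exact_mod_cast h1
    linarith
  have hts : ((j (n + 1) % p : ℕ) : ℚ) ≤ (p:ℚ) - 1 := by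
    have : ((j (n + 1) % p : ℕ) : ℚ) + 1 ≤ (p:ℚ) := by exact_mod_cast hmodlt (n + 1)
    linarith
  have hjts : ((j (n + 1) % p : ℕ) : ℚ) ≤ (j (n + 1) : ℚ) := by
    exact_mod_cast Nat.mod_le (j (n + 1)) p
  have hSt2 : (p:ℚ) - 1 - ((j (n + 1) % p : ℕ) : ℚ) ≤ St := by
    have h0 : (0:ℚ) ≤ (p:ℚ) - 1 - ((j (n + 1) % p : ℕ) : ℚ) := by linarith
    nlinarith [hSt_ge, hds]
  have hStnn : (0 : ℚ) ≤ St := by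
    rw [hStdef]; exact Finset.sum_nonneg hStterm
  -- main dichotomy
  have Hmain : 0 ≤ (1 + (r:ℚ) * ((p:ℚ) - 1)) * D - ((p:ℚ) * ((p:ℚ)^r - 1)) * N
      ∧ ((1 + (r:ℚ) * ((p:ℚ) - 1)) * D - ((p:ℚ) * ((p:ℚ)^r - 1)) * N = 0
        ↔ (rr (n + 1 + 1) = 0 ∧ n + 1 = 1 ∧ j 1 = p - 1)) := by
    by_cases hm0 : rr (n + 1 + 1) = 0
    · -- bottom level is 0
      have hTm : Tm = (p:ℚ)^r - 1 := by rw [hTmdef, hm0, TTd_zero]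
      have hFeq : (1 + (r:ℚ) * ((p:ℚ) - 1)) * D - ((p:ℚ) * ((p:ℚ)^r - 1)) * N
          = MID + ((p:ℚ)^r - 1) * ((j (n + 1) : ℚ) + 1 + St - (p:ℚ)) := by
        rw [hkey, hTm]; ring
      have hB : 0 ≤ (j (n + 1) : ℚ) + 1 + St - (p:ℚ) := by linarith
      constructor
      · rw [hFeq]
        have : (0:ℚ) ≤ ((p:ℚ)^r - 1) * ((j (n + 1) : ℚ) + 1 + St - (p:ℚ)) := by
          apply mul_nonneg (by linarith) hB
        linarith
      constructor
      · intro hF0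
        rw [hFeq] at hF0
        have hprod : (0:ℚ) ≤ ((p:ℚ)^r - 1) * ((j (n + 1) : ℚ) + 1 + St - (p:ℚ)) :=
          mul_nonneg (by linarith) hB
        have hM0 : MID = 0 := by linarith
        have hB0 : (j (n + 1) : ℚ) + 1 + St - (p:ℚ) = 0 := by
          have h1 : ((p:ℚ)^r - 1) * ((j (n + 1) : ℚ) + 1 + St - (p:ℚ)) = 0 := by linarith
          rcases mul_eq_zero.mp h1 with h | h
          · exfalso; linarith
          · exact h
        have hn0 : n = 0 := by
          by_contra hn
          have hn1 : 1 ≤ n := by omega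
          have hmem : (1 : ℕ) ∈ Finset.Icc 1 n := by simp [hn1]
          have hterm : (0:ℚ) < ((j 1 : ℚ) - (j 2 : ℚ)) * TTd (p:ℚ) r (rr 2) := by
            have h1 : j 2 < j 1 := hjdec 1 le_rfl (by omega)
            have h2 : rr 2 < r := hrr_lt_r 2 le_rfl (by omega)
            have h3 : (0:ℚ) < TTd (p:ℚ) r (rr 2) := TTd_pos _ hP2 _ _ h2
            have h4 : (0:ℚ) < (j 1 : ℚ) - (j 2 : ℚ) := by
              have : (j 2 : ℚ) + 1 ≤ (j 1 : ℚ) := by exact_mod_cast h1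
              linarith
            positivity
          have hge : ((j 1 : ℚ) - (j 2 : ℚ)) * TTd (p:ℚ) r (rr 2) ≤ MID := by
            rw [hMIDdef]
            exact Finset.single_le_sum hMIDterm hmem
          linarith
        subst hn0
        refine ⟨hm0, rfl, ?_⟩
        -- now n = 0 : single index
        have hStval : St = ((rr 1 : ℚ) - (rr 2 : ℚ)) * ((p:ℚ) - 1 - ((j 1 % p : ℕ) : ℚ)) := by
          rw [hStdef]; simp
        have hrr2 : (rr 2 : ℚ) = 0 := by exact_mod_cast hm0
        have hrrr : (rr 1 : ℚ) = (r : ℚ) := by exact_mod_cast hrr1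
        rw [hStval, hrr2, hrrr] at hB0
        have hr2 : (2:ℚ) ≤ (r:ℚ) := by exact_mod_cast hr
        have hjts1 : ((j 1 % p : ℕ) : ℚ) ≤ (j 1 : ℚ) := by
          exact_mod_cast Nat.mod_le (j 1) p
        have hts1 : ((j 1 % p : ℕ) : ℚ) ≤ (p:ℚ) - 1 := by
          have : ((j 1 % p : ℕ) : ℚ) + 1 ≤ (p:ℚ) := by exact_mod_cast hmodlt 1
          linarith
        have he : ((j 1 : ℚ) - ((j 1 % p : ℕ) : ℚ))
            + ((r:ℚ) - 1) * ((p:ℚ) - 1 - ((j 1 % p : ℕ) : ℚ)) = 0 := by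
          linear_combination hB0
        have hnn2 : (0:ℚ) ≤ ((r:ℚ) - 1) * ((p:ℚ) - 1 - ((j 1 % p : ℕ) : ℚ)) := by
          apply mul_nonneg (by linarith) (by linarith)
        have hz2 : ((r:ℚ) - 1) * ((p:ℚ) - 1 - ((j 1 % p : ℕ) : ℚ)) = 0 := by linarith
        have htval : ((j 1 % p : ℕ) : ℚ) = (p:ℚ) - 1 := by
          rcases mul_eq_zero.mp hz2 with h | h
          · exfalso; linarith
          · linarith
        have hjval : (j 1 : ℚ) = (p:ℚ) - 1 := by linarith
        have : (j 1 : ℚ) = ((p - 1 : ℕ) : ℚ) := by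
          rw [Nat.cast_sub (by omega)]; push_cast; linarith
        exact_mod_cast this
      · rintro ⟨-, hs1, hj1⟩
        have hn0 : n = 0 := by omega
        subst hn0
        rw [hFeq]
        have hM0 : MID = 0 := by rw [hMIDdef]; simp
        have hStval : St = ((rr 1 : ℚ) - (rr 2 : ℚ)) * ((p:ℚ) - 1 - ((j 1 % p : ℕ) : ℚ)) := by
          rw [hStdef]; simp
        have hrr2 : (rr 2 : ℚ) = 0 := by exact_mod_cast hm0
        have hrrr : (rr 1 : ℚ) = (r : ℚ) := by exact_mod_cast hrr1
        have hjm : j 1 % p = p - 1 := by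
          rw [hj1]; exact Nat.mod_eq_of_lt (by omega)
        have hcast : ((j 1 % p : ℕ) : ℚ) = (p:ℚ) - 1 := by
          rw [hjm, Nat.cast_sub (by omega)]; push_cast; ring
        have hjcast : (j 1 : ℚ) = (p:ℚ) - 1 := by
          rw [hj1, Nat.cast_sub (by omega)]; push_cast; ring
        rw [hM0, hStval, hrr2, hrrr, hcast, hjcast]
        ring
    · -- bottom level ≥ 1 : strict inequality
      have hm1 : 1 ≤ rr (n + 1 + 1) := by omega
      have hmr : rr (n + 1 + 1) < r := hrr_lt_r (n + 1 + 1) (by omega) (by omega)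
      have hm2 : rr (n + 1 + 1) + 2 ≤ r := by omega
      have hTmbig : (p:ℚ)^r - 1 < Tm := by
        rw [hTmdef]; exact TTd_big _ hP2 r _ hm1 hm2
      have hF : 0 < (1 + (r:ℚ) * ((p:ℚ) - 1)) * D - ((p:ℚ) * ((p:ℚ)^r - 1)) * N := by
        rw [hkey]
        have hTmpos : (0:ℚ) < Tm := by nlinarith
        have h5 : (((j (n + 1) % p : ℕ) : ℚ) + 1) * Tm ≤ ((j (n + 1) : ℚ) + 1) * Tm := by
          apply mul_le_mul_of_nonneg_right (by linarith) (by linarith)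
        have h6 : ((p:ℚ)^r - 1) * ((p:ℚ) - 1 - ((j (n + 1) % p : ℕ) : ℚ))
            ≤ ((p:ℚ)^r - 1) * St := by
          apply mul_le_mul_of_nonneg_left hSt2 (by linarith)
        have h7 : (0:ℚ) < (((j (n + 1) % p : ℕ) : ℚ) + 1) * (Tm - ((p:ℚ)^r - 1)) := by
          apply mul_pos (by positivity) (by linarith)
        nlinarith
      constructor
      · linarith
      constructor
      · intro h; exfalso; linarith
      · rintro ⟨h0, -, -⟩; exact absurd h0 hm0
  -- conclude
  obtain ⟨Hnonneg, Hiff⟩ := Hmain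
  constructor
  · rw [div_le_div_iff₀ hDpos hA]
    linarith
  · rw [div_eq_div_iff hDpos.ne' hA.ne']
    constructor
    · intro h
      exact Hiff.mp (by linarith)
    · intro h
      have := Hiff.mpr h
      linarith
end

section
/- Let $p$ be a prime and $1 \le r' < r$ integers. Then $\frac{1+r'(p-1)}{p^{r-r'+1}(p^{r'}-1)} \le \frac{1+r(p-1)}{p(p^r-1)}$, with equality only when $p = r = 2$ (and hence $r' = 1$). -/
lemma nat_bernoulli' (q a : ℕ) : 1 + a * q ≤ (q + 1) ^ a := by
  induction a with
  | zero => simp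
  | succ n ih =>
    rw [pow_succ]
    calc 1 + (n + 1) * q ≤ (1 + n * q) * (q + 1) := by nlinarith [Nat.zero_le (n * q * q)]
    _ ≤ (q + 1) ^ n * (q + 1) := Nat.mul_le_mul_right _ ih

lemma key_nat' (p a s : ℕ) (hp : 2 ≤ p) (ha : 1 ≤ a) (hs : 1 ≤ s)
    (h : ¬(p = 2 ∧ a = 1 ∧ s = 1)) : a + 1 ≤ s * (p ^ a - 1) := by
  have hb : 1 + a * (p - 1) ≤ p ^ a := by
    have h1 := nat_bernoulli' (p - 1) a
    have h2 : p - 1 + 1 = p := by omega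
    rwa [h2] at h1
  have haa : a * 1 ≤ a * (p - 1) := Nat.mul_le_mul_left a (by omega)
  by_cases hs2 : 2 ≤ s
  · calc a + 1 ≤ 2 * (p ^ a - 1) := by omega
    _ ≤ s * (p ^ a - 1) := Nat.mul_le_mul_right _ hs2
  · have hs1 : s = 1 := by omega
    subst hs1
    rw [one_mul]
    by_cases hp3 : 3 ≤ p
    · have : a * 2 ≤ a * (p - 1) := Nat.mul_le_mul_left a (by omega)
      omega
    · have hp2 : p = 2 := by omega
      subst hp2
      have ha2 : 2 ≤ a := by
        rcases Nat.lt_or_ge a 2 with h' | h'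
        · exact absurd ⟨rfl, by omega, rfl⟩ h
        · exact h'
      have h1 : a - 1 < 2 ^ (a - 1) := Nat.lt_two_pow_self
      have h2 : 2 ^ (a - 1) * 2 = 2 ^ a := by
        rw [← pow_succ]
        congr 1
        omega
      omega

/-- For a prime `p` and integers `1 ≤ r' < r`,
`(1 + r'(p-1))/(p^(r-r'+1)(p^(r') - 1)) ≤ (1 + r(p-1))/(p(p^r - 1))`,
with equality only when `p = r = 2`. -/
theorem a_invariant_compare
    (p : ℕ) (hp : p.Prime) (r r' : ℕ) (hr' : 1 ≤ r') (hrr : r' < r) :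
    ((1 + r' * (p - 1 : ℚ)) / ((p : ℚ) ^ (r - r' + 1) * ((p : ℚ) ^ r' - 1))
      ≤ (1 + r * (p - 1 : ℚ)) / (p * ((p : ℚ) ^ r - 1)))
    ∧ ((1 + r' * (p - 1 : ℚ)) / ((p : ℚ) ^ (r - r' + 1) * ((p : ℚ) ^ r' - 1))
        = (1 + r * (p - 1 : ℚ)) / (p * ((p : ℚ) ^ r - 1)) → p = 2 ∧ r = 2) := by
  by_cases hcase : p = 2 ∧ r = 2
  · obtain ⟨hp2, hr2⟩ := hcase
    have hr'1 : r' = 1 := by omega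
    subst hp2 hr2 hr'1
    norm_num
  · -- strict inequality
    obtain ⟨s, hs1, rfl⟩ : ∃ s, 1 ≤ s ∧ r = r' + s := ⟨r - r', by omega, by omega⟩
    have hs' : r' + s - r' + 1 = s + 1 := by omega
    rw [hs']
    have hp2 : 2 ≤ p := hp.two_le
    have hkey : r' + 1 ≤ s * (p ^ r' - 1) := by
      refine key_nat' p r' s hp2 hr' hs1 ?_
      rintro ⟨h1, h2, h3⟩
      exact hcase ⟨h1, by omega⟩
    have h1p : 1 ≤ p ^ r' := Nat.one_le_pow _ _ (by omega)
    have hkeyQ : (r' : ℚ) + 1 ≤ (s : ℚ) * ((p : ℚ) ^ r' - 1) := by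
      have h := (Nat.cast_le (α := ℚ)).mpr hkey
      push_cast [h1p] at h
      convert h using 2
    have hx : (2 : ℚ) ≤ (p : ℚ) := by exact_mod_cast hp2
    have hx0 : (0 : ℚ) < (p : ℚ) := by linarith
    have hxr' : (1 : ℚ) < (p : ℚ) ^ r' := one_lt_pow₀ (by linarith) (by omega)
    have hxr : (1 : ℚ) < (p : ℚ) ^ (r' + s) := one_lt_pow₀ (by linarith) (by omega)
    have hd1 : (0 : ℚ) < (p : ℚ) ^ (s + 1) * ((p : ℚ) ^ r' - 1) :=
      mul_pos (pow_pos hx0 _) (by linarith)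
    have hd2 : (0 : ℚ) < (p : ℚ) * ((p : ℚ) ^ (r' + s) - 1) := mul_pos hx0 (by linarith)
    have hsQ : (1 : ℚ) ≤ (s : ℚ) := by exact_mod_cast hs1
    have hr'Q : (1 : ℚ) ≤ (r' : ℚ) := by exact_mod_cast hr'
    have hlt : (1 + r' * ((p : ℚ) - 1)) / ((p : ℚ) ^ (s + 1) * ((p : ℚ) ^ r' - 1))
        < (1 + (r' + s : ℕ) * ((p : ℚ) - 1)) / ((p : ℚ) * ((p : ℚ) ^ (r' + s) - 1)) := by
      rw [div_lt_div_iff₀ hd1 hd2]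
      push_cast
      rw [pow_add, pow_succ]
      have hE : (0 : ℚ) ≤ ((p : ℚ) - 1) * ((s : ℚ) * ((p : ℚ) ^ r' - 1) - (r' : ℚ)) - 1 := by
        nlinarith
      have hps : (0 : ℚ) < (p : ℚ) ^ s := pow_pos hx0 _
      have hD : (0 : ℚ) < (p : ℚ) ^ s * (((p : ℚ) - 1) * ((s : ℚ) * ((p : ℚ) ^ r' - 1)
          - (r' : ℚ)) - 1) + 1 + (r' : ℚ) * ((p : ℚ) - 1) := by
        have := mul_nonneg hps.le hE
        nlinarith
      nlinarith [mul_pos hx0 hD]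
    exact ⟨hlt.le, fun heq => (hlt.ne heq).elim⟩
end

section
/- Let $k'$ be a field and $a \in R((t))$ where $R$ is a reduced commutative ring, writing $a = \sum_i a_i t^i$ with $a_i \in R$ and $a_i = 0$ for $i \ll 0$. Suppose that for every prime $\mathfrak{p}$ of $R$, the image of $a$ in $\kappa(\mathfrak{p})((t))$ has $t$-adic order exactly $n$ for a fixed integer $n$. Then $a$ is a unit of $R((t))$. -/
open HahnSeries

/-- Let `R` be a reduced commutative ring and `a ∈ R((t))` such that
for every prime `𝔭` of `R`, the image of `a` in `κ(𝔭)((t))` has `t`-adic order exactly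
`n` for a fixed integer `n`.  Then `a` is a unit of `R((t))`. -/
theorem isUnit_of_const_order
    (R : Type*) [CommRing R] [IsReduced R]
    (a : LaurentSeries R) (n : ℤ)
    (h : ∀ (P : Ideal R), P.IsPrime →
      (a.map ((algebraMap (R ⧸ P) (FractionRing (R ⧸ P))).comp
          (Ideal.Quotient.mk P) : R →+* FractionRing (R ⧸ P)) ≠ 0
        ∧ (a.map ((algebraMap (R ⧸ P) (FractionRing (R ⧸ P))).comp
          (Ideal.Quotient.mk P) : R →+* FractionRing (R ⧸ P))).order = n)) :
    IsUnit a := by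
  -- coefficients below n vanish
  have hlt : ∀ m : ℤ, m < n → a.coeff m = 0 := by
    intro m hm
    have hmem : ∀ P : Ideal R, P.IsPrime → a.coeff m ∈ P := by
      intro P hP
      obtain ⟨hne, hord⟩ := h P hP
      have hc : (a.map ((algebraMap (R ⧸ P) (FractionRing (R ⧸ P))).comp
          (Ideal.Quotient.mk P) : R →+* FractionRing (R ⧸ P))).coeff m = 0 := by
        apply HahnSeries.coeff_eq_zero_of_lt_order
        rw [hord]; exact hm
      simp only [HahnSeries.map_coeff, ZeroHom.coe_coe, RingHom.coe_comp,
        Function.comp_apply] at hc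
      have : (Ideal.Quotient.mk P) (a.coeff m) = 0 :=
        IsFractionRing.injective (R ⧸ P) (FractionRing (R ⧸ P)) (by simpa using hc)
      exact (Ideal.Quotient.eq_zero_iff_mem).mp this
    have : a.coeff m ∈ nilradical R := by
      rw [nilradical_eq_sInf, Submodule.mem_sInf]
      intro P hP
      exact hmem P hP
    rw [nilradical_eq_zero] at this
    simpa using this
  -- coefficient at n is a unit
  have hu : IsUnit (a.coeff n) := by
    by_contra hnu
    obtain ⟨M, hM, hsub⟩ := exists_max_ideal_of_mem_nonunits (mem_nonunits_iff.mpr hnu)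
    obtain ⟨hne, hord⟩ := h M hM.isPrime
    have := mt HahnSeries.coeff_order_eq_zero.mp hne
    rw [hord] at this
    simp only [HahnSeries.map_coeff, ZeroHom.coe_coe, RingHom.coe_comp,
      Function.comp_apply] at this
    apply this
    rw [Ideal.Quotient.eq_zero_iff_mem.mpr hsub, map_zero]
  rcases subsingleton_or_nontrivial R with hs | hn
  · exact isUnit_of_subsingleton a
  have ha0 : a ≠ 0 := by
    intro h0
    rw [h0] at hu
    simp at hu
  -- order of a is n
  have hordn : a.order = n := by
    refine le_antisymm (HahnSeries.order_le_of_coeff_ne_zero hu.ne_zero) ?_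
    by_contra hlt'
    push_neg at hlt'
    exact (mt HahnSeries.coeff_order_eq_zero.mp ha0) (hlt _ hlt')
  -- decompose a
  have hdecomp := a.single_order_mul_powerSeriesPart
  have h1 : IsUnit (HahnSeries.single (a.order) (1 : R)) := by
    refine IsUnit.of_mul_eq_one (HahnSeries.single (-a.order) 1) ?_
    rw [HahnSeries.single_mul_single, add_neg_cancel, mul_one]
    rfl
  have h2 : IsUnit a.powerSeriesPart := by
    rw [PowerSeries.isUnit_iff_constantCoeff]
    have := a.powerSeriesPart_coeff 0
    rw [Nat.cast_zero, add_zero, hordn] at this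
    rw [← PowerSeries.coeff_zero_eq_constantCoeff_apply, this]
    exact hu
  have h3 : IsUnit (HahnSeries.ofPowerSeries ℤ R a.powerSeriesPart) := h2.map _
  rw [← hdecomp]
  exact h1.mul h3
end

section
/- Let $R$ be a commutative ring and $a = \sum_i a_i t^i \in R((t))$. For each integer $m$, the set $\{\mathfrak{p} \in \operatorname{Spec} R \mid \operatorname{ord}_{a}(\mathfrak{p}) \le m\}$ equals the finite union $\bigcup_{i \le m} \operatorname{Spec} R_{a_i}$ of distinguished open sets, and in particular is a retrocompact open subset of $\operatorname{Spec} R$; consequently $\{\operatorname{ord}_a = m\}$ is locally closed and constructible. -/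
/-
A coefficient `aᵢ` can lie outside a prime only if `aᵢ ≠ 0`, i.e. only for `i ≥ ord a`; so
`{ord_a ≤ m}` is the union of the basic opens `D(aᵢ)` over the finite interval `[ord a, m]`.
Basic opens of `Spec R` are retrocompact, finite unions preserve this, and `{ord_a = m}` is the
difference `{ord_a ≤ m} \ {ord_a ≤ m - 1}` of two such opens.
-/

/-- A subset of a topological space is retrocompact if its intersection with every
compact open subset is compact (equivalently, its inclusion is quasi-compact). -/
def IsRetrocompactSet {X : Type*} [TopologicalSpace X] (s : Set X) : Prop :=
  ∀ U : Set X, IsOpen U → IsCompact U → IsCompact (s ∩ U)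

/-- A subset is constructible if it is a finite union of differences of retrocompact
open subsets. -/
def IsConstructible {X : Type*} [TopologicalSpace X] (s : Set X) : Prop :=
  ∃ (k : ℕ) (U V : Fin k → Set X),
    (∀ i, IsOpen (U i) ∧ IsRetrocompactSet (U i) ∧ IsOpen (V i) ∧ IsRetrocompactSet (V i))
      ∧ s = ⋃ i, (U i \ V i)

/-- `{x ∈ Spec R ∣ ord_a(x) ≤ m}`: the set of primes at which some coefficient
`a.coeff i` with `i ≤ m` does not vanish. -/
def ordLe {R : Type*} [CommRing R] (a : LaurentSeries R) (m : ℤ) :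
    Set (PrimeSpectrum R) :=
  {x | ∃ i ≤ m, a.coeff i ∉ x.asIdeal}

section Topology

variable {X : Type*} [TopologicalSpace X] {U V : Set X}

lemma isRetrocompactSet_iff_isRetrocompact : IsRetrocompactSet U ↔ IsRetrocompact U :=
  ⟨fun h _ hc ho => h _ ho hc, fun h _ ho hc => h hc ho⟩

lemma IsOpen.isLocallyClosed_diff (hU : IsOpen U) (hV : IsOpen V) : IsLocallyClosed (U \ V) :=
  hU.isLocallyClosed.inter hV.isClosed_compl.isLocallyClosed

lemma isConstructible_diff (hU : IsOpen U) (hU' : IsRetrocompactSet U) (hV : IsOpen V)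
    (hV' : IsRetrocompactSet V) : IsConstructible (U \ V) :=
  ⟨1, fun _ => U, fun _ => V, fun _ => ⟨hU, hU', hV, hV'⟩, (Set.iUnion_const _).symm⟩

end Topology

section OrdLe

variable {R : Type*} [CommRing R] (a : LaurentSeries R) (m : ℤ)

lemma ordLe_eq_biUnion_Icc_order :
    ordLe a m = ⋃ i ∈ Finset.Icc a.order m,
      (PrimeSpectrum.basicOpen (a.coeff i) : Set (PrimeSpectrum R)) := by
  ext x
  simp only [ordLe, Set.mem_iUnion, Finset.mem_Icc, SetLike.mem_coe,
    PrimeSpectrum.mem_basicOpen, exists_prop]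
  refine ⟨fun ⟨i, him, hi⟩ => ⟨i, ⟨?_, him⟩, hi⟩, fun ⟨i, ⟨_, him⟩, hi⟩ => ⟨i, him, hi⟩⟩
  exact HahnSeries.order_le_of_coeff_ne_zero fun h => hi (h ▸ x.asIdeal.zero_mem)

lemma isOpen_ordLe : IsOpen (ordLe a m) := by
  rw [ordLe_eq_biUnion_Icc_order]
  exact isOpen_biUnion fun i _ => (PrimeSpectrum.basicOpen _).isOpen

lemma isRetrocompact_ordLe : IsRetrocompact (ordLe a m) := by
  rw [ordLe_eq_biUnion_Icc_order]
  exact .biUnion (Finset.finite_toSet _) fun i _ => PrimeSpectrum.isRetrocompact_basicOpen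

end OrdLe

/-- For `a = ∑ aᵢ tⁱ ∈ R((t))` and `m ∈ ℤ`, the set
`{ord_a ≤ m}` is the finite union `⋃_{i ≤ m} Spec R_{aᵢ}` of distinguished open sets;
in particular it is a retrocompact open subset of `Spec R`, and consequently
`{ord_a = m} = {ord_a ≤ m} \ {ord_a ≤ m-1}` is locally closed and constructible. -/
theorem ordLe_constructible
    (R : Type*) [CommRing R] (a : LaurentSeries R) (m : ℤ) :
    (∃ s : Finset ℤ, (∀ i ∈ s, i ≤ m) ∧
        ordLe a m = ⋃ i ∈ s, (PrimeSpectrum.basicOpen (a.coeff i) : Set (PrimeSpectrum R)))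
    ∧ IsOpen (ordLe a m) ∧ IsRetrocompactSet (ordLe a m)
    ∧ IsLocallyClosed (ordLe a m \ ordLe a (m - 1))
    ∧ IsConstructible (ordLe a m \ ordLe a (m - 1)) := by
  have hret (n : ℤ) : IsRetrocompactSet (ordLe a n) :=
    isRetrocompactSet_iff_isRetrocompact.mpr (isRetrocompact_ordLe a n)
  refine ⟨⟨Finset.Icc a.order m, fun i hi => (Finset.mem_Icc.mp hi).2,
      ordLe_eq_biUnion_Icc_order a m⟩, isOpen_ordLe a m, hret m,
    (isOpen_ordLe a m).isLocallyClosed_diff (isOpen_ordLe a (m - 1)), ?_⟩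
  exact isConstructible_diff (isOpen_ordLe a m) (hret m) (isOpen_ordLe a (m - 1)) (hret (m - 1))
end

section
/- Let $R$ be a commutative ring and $a \in R((t))$ such that $\operatorname{ord}_a(x) < \infty$ for every $x \in \operatorname{Spec} R$. Then the image $\operatorname{ord}_a(\operatorname{Spec} R) \subset \mathbb{Z}$ is a finite set. -/
/-- Let `R` be a commutative ring and `a ∈ R((t))` such that
`ord_a(x) < ∞` for every `x ∈ Spec R`, i.e. at every prime some coefficient of `a`
does not vanish.  Then the image of `ord_a` is a finite subset of `ℤ`: there is a
finite set `s ⊆ ℤ` such that at every prime `x` the order of `a` (the least `i` with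
`a.coeff i ∉ x.asIdeal`) belongs to `s`. -/
theorem ord_image_finite
    (R : Type*) [CommRing R] (a : LaurentSeries R)
    (h : ∀ x : PrimeSpectrum R, ∃ i : ℤ, a.coeff i ∉ x.asIdeal) :
    ∃ s : Finset ℤ, ∀ x : PrimeSpectrum R, ∃ m ∈ s,
      a.coeff m ∉ x.asIdeal ∧ ∀ i < m, a.coeff i ∈ x.asIdeal := by
  classical
  by_cases hR : Nontrivial R
  · obtain ⟨M, hM⟩ := Ideal.exists_maximal R
    set x0 : PrimeSpectrum R := ⟨M, hM.isPrime⟩ with hx0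
    have ha : a ≠ 0 := by
      rintro rfl
      obtain ⟨i, hi⟩ := h x0
      simp at hi
    -- the span of all coefficients is the whole ring
    have htop : Ideal.span (Set.range a.coeff) = ⊤ := by
      by_contra hne
      obtain ⟨m, hm, hle⟩ := Ideal.exists_le_maximal _ hne
      obtain ⟨i, hi⟩ := h ⟨m, hm.isPrime⟩
      exact hi (hle (Ideal.subset_span ⟨i, rfl⟩))
    have h1 : (1 : R) ∈ Ideal.span (Set.range a.coeff) := htop ▸ trivial
    obtain ⟨c, hcsub, hc1⟩ := Submodule.mem_span_finite_of_mem_span h1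
    -- choose index for each coefficient in c
    have hch : ∀ r ∈ c, ∃ i : ℤ, a.coeff i = r := fun r hr => hcsub hr
    choose f hf using hch
    set T : Finset ℤ := c.attach.image (fun r => f r.1 r.2) with hT
    have hsub : (c : Set R) ⊆ a.coeff '' (T : Set ℤ) := by
      intro r hr
      exact ⟨f r hr, Finset.mem_coe.mpr (Finset.mem_image.mpr ⟨⟨r, hr⟩, Finset.mem_attach _ _, rfl⟩), hf r hr⟩
    have h1T : (1 : R) ∈ Ideal.span (a.coeff '' (T : Set ℤ)) :=
      Ideal.span_mono hsub hc1
    -- at each prime some coefficient with index in T is a unit mod the prime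
    have key : ∀ x : PrimeSpectrum R, ∃ i ∈ T, a.coeff i ∉ x.asIdeal := by
      intro x
      by_contra hcon
      push_neg at hcon
      have : Ideal.span (a.coeff '' (T : Set ℤ)) ≤ x.asIdeal := by
        rw [Ideal.span_le]
        rintro r ⟨i, hi, rfl⟩
        exact hcon i hi
      exact x.isPrime.ne_top (Ideal.eq_top_iff_one _ |>.mpr (this h1T))
    have hTne : T.Nonempty := by
      obtain ⟨i, hi, _⟩ := key x0
      exact ⟨i, hi⟩
    refine ⟨Finset.Icc a.order (T.max' hTne), fun x => ?_⟩
    have hbdd : ∃ b : ℤ, ∀ z : ℤ, a.coeff z ∉ x.asIdeal → b ≤ z := by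
      refine ⟨a.order, fun z hz => ?_⟩
      exact HahnSeries.order_le_of_coeff_ne_zero (fun h0 => hz (h0 ▸ x.asIdeal.zero_mem))
    obtain ⟨m, hm, hmin⟩ := Int.exists_least_of_bdd (P := fun z => a.coeff z ∉ x.asIdeal) hbdd (h x)
    refine ⟨m, ?_, hm, fun i hi => by_contra fun hc => absurd (hmin i hc) (not_le.mpr hi)⟩
    rw [Finset.mem_Icc]
    obtain ⟨i, hiT, hi⟩ := key x
    exact ⟨HahnSeries.order_le_of_coeff_ne_zero
      (fun h0 => hm (h0 ▸ x.asIdeal.zero_mem)), (hmin i hi).trans (T.le_max' i hiT)⟩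
  · have : Subsingleton R := not_nontrivial_iff_subsingleton.mp hR
    exact ⟨∅, fun x => (x.isPrime.ne_top (Subsingleton.elim _ _)).elim⟩
end

section
/- For a real number $k > -1$ and nonnegative integers $\beta_1, \beta_2$, define $\Phi_k(B,\beta_1,\beta_2) := \int_1^B u^k \log(u)^{\beta_1} \log(B/u)^{\beta_2}\, du$. Then as $B \to \infty$, $\Phi_k(B,\beta_1,\beta_2) = \frac{\beta_2!\, B^{k+1} \log(B)^{\beta_1}}{(k+1)^{\beta_2+1}} + O(f(B))$, where $f(B) = B^{k+1}\log(B)^{\beta_1-1}$ if $\beta_1 \ge 1$ and $f(B) = \log(B)^{\beta_2}$ if $\beta_1 = 0$. -/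
open Real Filter Asymptotics MeasureTheory intervalIntegral Set

namespace PhiAux

variable {k : ℝ}

noncomputable def f (k : ℝ) (a b : ℕ) (B u : ℝ) : ℝ :=
  u ^ k * Real.log u ^ a * (Real.log B - Real.log u) ^ b

noncomputable def Phi (k : ℝ) (a b : ℕ) (B : ℝ) : ℝ :=
  ∫ u in (1:ℝ)..B, f k a b B u

lemma contOn (a b : ℕ) (B : ℝ) :
    ContinuousOn (f k a b B) (Set.Icc 1 B) := by
  have hne : ∀ x ∈ Set.Icc (1:ℝ) B, x ≠ 0 := by
    intro x hx
    have := hx.1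
    intro h
    rw [h] at this
    linarith
  have hlog : ContinuousOn Real.log (Set.Icc (1:ℝ) B) := by
    apply Real.continuousOn_log.mono
    intro x hx
    simpa using hne x hx
  have hrpow : ContinuousOn (fun u : ℝ => u ^ k) (Set.Icc (1:ℝ) B) :=
    ContinuousOn.rpow_const continuousOn_id fun x hx => Or.inl (hne x hx)
  exact (hrpow.mul (hlog.pow a)).mul ((continuousOn_const.sub hlog).pow b)

lemma integrable (a b : ℕ) {B : ℝ} (hB : 1 ≤ B) :
    IntervalIntegrable (f k a b B) MeasureTheory.volume 1 B := by
  apply ContinuousOn.intervalIntegrable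
  rw [Set.uIcc_of_le hB]
  exact contOn a b B

lemma Phi_identity (hk : -1 < k) (a b : ℕ) {B : ℝ} (hB : 1 ≤ B) :
    Phi k a b B = (b / (k+1)) * Phi k a (b-1) B - (a / (k+1)) * Phi k (a-1) b B
      + B ^ (k+1) * Real.log B ^ a * (0:ℝ) ^ b / (k+1)
      - (0:ℝ) ^ a * Real.log B ^ b / (k+1) := by
  have hK : (0:ℝ) < k + 1 := by linarith
  set F : ℝ → ℝ := fun u => u ^ (k+1) * Real.log u ^ a * (Real.log B - Real.log u) ^ b with hF
  set D : ℝ → ℝ := fun x => (k+1) * f k a b B x + (a:ℝ) * f k (a-1) b B x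
      - (b:ℝ) * f k a (b-1) B x with hD
  have hderiv : ∀ x ∈ Set.uIcc (1:ℝ) B, HasDerivAt F (D x) x := by
    intro x hx
    rw [Set.uIcc_of_le hB] at hx
    have hx0 : (0:ℝ) < x := lt_of_lt_of_le zero_lt_one hx.1
    have h1 : HasDerivAt (fun u : ℝ => u ^ (k+1)) ((k+1) * x ^ k) x := by
      have := Real.hasDerivAt_rpow_const (x := x) (p := k+1) (Or.inl hx0.ne')
      simpa [show k + 1 - 1 = k by ring] using this
    have h2 : HasDerivAt (fun u : ℝ => Real.log u ^ a)
        ((a:ℝ) * Real.log x ^ (a-1) * x⁻¹) x :=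
      (Real.hasDerivAt_log hx0.ne').pow a
    have h3 : HasDerivAt (fun u : ℝ => Real.log B - Real.log u) (-x⁻¹) x := by
      exact ((hasDerivAt_const x (Real.log B)).sub (Real.hasDerivAt_log hx0.ne')).congr_deriv
        (by ring)
    have h4 := h3.pow b
    have hprod := (h1.mul h2).mul h4
    have hxx : x ^ (k+1) * x⁻¹ = x ^ k := by
      rw [← Real.rpow_neg_one x, ← Real.rpow_add hx0]
      norm_num
    refine hprod.congr_deriv ?_
    simp only [hD, f]
    simp only [Pi.mul_apply, Pi.pow_apply]
    rw [← hxx]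
    ring
  have hint : IntervalIntegrable D MeasureTheory.volume 1 B := by
    exact (((integrable a b hB).const_mul _).add
      ((integrable (a-1) b hB).const_mul _)).sub ((integrable a (b-1) hB).const_mul _)
  have key : ∫ x in (1:ℝ)..B, D x = F B - F 1 :=
    integral_eq_sub_of_hasDerivAt hderiv hint
  have split : ∫ x in (1:ℝ)..B, D x
      = (k+1) * Phi k a b B + (a:ℝ) * Phi k (a-1) b B - (b:ℝ) * Phi k a (b-1) B := by
    simp only [hD]
    rw [intervalIntegral.integral_sub (((integrable a b hB).const_mul _).add
        ((integrable (a-1) b hB).const_mul _)) ((integrable a (b-1) hB).const_mul _),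
      intervalIntegral.integral_add ((integrable a b hB).const_mul _)
        ((integrable (a-1) b hB).const_mul _),
      intervalIntegral.integral_const_mul, intervalIntegral.integral_const_mul,
      intervalIntegral.integral_const_mul]
    rfl
  rw [split] at key
  have hFB : F B = B ^ (k+1) * Real.log B ^ a * (0:ℝ) ^ b := by
    simp [hF]
  have hF1 : F 1 = (0:ℝ) ^ a * Real.log B ^ b := by
    simp [hF]
  rw [hFB, hF1] at key
  field_simp
  linarith [key]

lemma log_pow_isBigO {m n : ℕ} (h : m ≤ n) :
    (fun B : ℝ => Real.log B ^ m) =O[atTop] (fun B : ℝ => Real.log B ^ n) := by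
  apply IsBigO.of_bound 1
  filter_upwards [eventually_ge_atTop (Real.exp 1)] with B hB
  have h1 : 1 ≤ Real.log B := by
    rw [← Real.log_exp 1]
    exact Real.log_le_log (Real.exp_pos 1) hB
  rw [one_mul, Real.norm_eq_abs, Real.norm_eq_abs,
    abs_of_nonneg (pow_nonneg (by linarith) _),
    abs_of_nonneg (pow_nonneg (by linarith) _)]
  exact pow_le_pow_right₀ h1 h

lemma log_pow_isBigO_rpow (b : ℕ) (hK : (0:ℝ) < k + 1) :
    (fun B : ℝ => Real.log B ^ b) =O[atTop] (fun B : ℝ => B ^ (k+1)) := by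
  have := (isLittleO_log_rpow_rpow_atTop (b:ℝ) hK).isBigO
  exact this.congr_left fun x => Real.rpow_natCast _ b

lemma diff00 (hk : -1 < k) :
    (fun B : ℝ => Phi k 0 0 B
        - (Nat.factorial 0 : ℝ) * B ^ (k+1) * Real.log B ^ 0 / (k+1)^(0+1))
      =O[atTop] (fun B : ℝ => Real.log B ^ 0) := by
  have hK : (0:ℝ) < k+1 := by linarith
  have hPhi : ∀ B : ℝ, Phi k 0 0 B = (B ^ (k+1) - 1) / (k+1) := by
    intro B
    have h1 : Phi k 0 0 B = ∫ u in (1:ℝ)..B, u ^ k := by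
      simp [Phi, f]
    rw [h1, integral_rpow (Or.inl hk)]
    simp
  have heq : (fun B : ℝ => Phi k 0 0 B
      - (Nat.factorial 0 : ℝ) * B ^ (k+1) * Real.log B ^ 0 / (k+1)^(0+1))
      = fun _ : ℝ => -(1/(k+1)) := by
    funext B
    rw [hPhi]
    simp only [Nat.factorial, Nat.cast_one, pow_zero, pow_one, mul_one, one_mul]
    field_simp
    ring
  rw [heq]
  simpa using isBigO_const_const (-(1/(k+1))) (c' := (1:ℝ)) one_ne_zero atTop

lemma diff_isBigO (hk : -1 < k) : ∀ n a b : ℕ, a + b ≤ n →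
    (fun B : ℝ => Phi k a b B
        - (b.factorial : ℝ) * B ^ (k+1) * Real.log B ^ a / (k+1)^(b+1))
      =O[atTop]
    (if 1 ≤ a then (fun B : ℝ => B ^ (k+1) * Real.log B ^ (a-1))
      else fun B : ℝ => Real.log B ^ b) := by
  have hK : (0:ℝ) < k + 1 := by linarith
  intro n
  induction n with
  | zero =>
    intro a b hab
    obtain ⟨rfl, rfl⟩ : a = 0 ∧ b = 0 := by omega
    simpa using diff00 hk
  | succ n ih =>
    intro a b hab
    match a, b with
    | 0, 0 => simpa using diff00 hk
    | 0, c+1 =>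
      rw [if_neg (by omega)]
      have ihc := ih 0 c (by omega)
      rw [if_neg (by omega)] at ihc
      have hEq : (fun B : ℝ => Phi k 0 (c+1) B
          - ((c+1).factorial : ℝ) * B ^ (k+1) * Real.log B ^ 0 / (k+1)^(c+1+1))
          =ᶠ[atTop] fun B : ℝ => ((c:ℝ)+1)/(k+1)
              * (Phi k 0 c B - (c.factorial : ℝ) * B ^ (k+1) * Real.log B ^ 0 / (k+1)^(c+1))
            - Real.log B ^ (c+1) / (k+1) := by
        filter_upwards [eventually_ge_atTop (1:ℝ)] with B hB
        have hid := Phi_identity hk 0 (c+1) hB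
        simp only [Nat.cast_zero, zero_div, zero_mul, sub_zero, pow_zero, one_mul,
          zero_pow (Nat.succ_ne_zero c), mul_zero, zero_div, add_zero,
          Nat.add_sub_cancel, Nat.cast_add, Nat.cast_one] at hid
        rw [hid]
        have hfac : ((c+1).factorial : ℝ) = ((c:ℝ)+1) * (c.factorial : ℝ) := by
          push_cast [Nat.factorial_succ]
          ring
        rw [hfac]
        field_simp
        ring
      refine hEq.trans_isBigO (IsBigO.sub ?_ ?_)
      · exact (ihc.trans (log_pow_isBigO (Nat.le_succ c))).const_mul_left _
      · have := (isBigO_refl (fun B : ℝ => Real.log B ^ (c+1)) atTop).const_mul_left (1/(k+1))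
        exact this.congr_left fun B => by ring
    | d+1, b =>
      rw [if_pos (by omega), Nat.add_sub_cancel]
      have hEq : (fun B : ℝ => Phi k (d+1) b B
          - (b.factorial : ℝ) * B ^ (k+1) * Real.log B ^ (d+1) / (k+1)^(b+1))
          =ᶠ[atTop] fun B : ℝ => (b:ℝ)/(k+1)
              * (Phi k (d+1) (b-1) B
                - ((b-1).factorial : ℝ) * B ^ (k+1) * Real.log B ^ (d+1) / (k+1)^((b-1)+1))
            - ((d:ℝ)+1)/(k+1) * Phi k d b B := by
        filter_upwards [eventually_ge_atTop (1:ℝ)] with B hB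
        have hid := Phi_identity hk (d+1) b hB
        simp only [Nat.add_sub_cancel, zero_pow (Nat.succ_ne_zero d), zero_mul, zero_div,
          sub_zero, Nat.cast_add, Nat.cast_one] at hid
        rw [hid]
        match b with
        | 0 =>
          simp only [Nat.cast_zero, zero_div, zero_mul, Nat.factorial_zero, Nat.cast_one,
            pow_zero, pow_one]
          field_simp
          ring
        | c+1 =>
          simp only [Nat.add_sub_cancel, zero_pow (Nat.succ_ne_zero c), mul_zero, zero_div,
            add_zero, Nat.cast_add, Nat.cast_one]
          have hfac : ((c+1).factorial : ℝ) = ((c:ℝ)+1) * (c.factorial : ℝ) := by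
            push_cast [Nat.factorial_succ]
            ring
          rw [hfac]
          field_simp
          ring
      refine hEq.trans_isBigO (IsBigO.sub ?_ ?_)
      · match b with
        | 0 =>
          have hz : (fun B : ℝ => ((0:ℕ):ℝ)/(k+1) * (Phi k (d+1) (0-1) B
              - ((0-1:ℕ).factorial : ℝ) * B ^ (k+1) * Real.log B ^ (d+1) / (k+1)^((0-1:ℕ)+1)))
              = fun _ : ℝ => (0:ℝ) := by
            funext B
            norm_num
          rw [hz]
          exact isBigO_zero _ _
        | c+1 =>
          have ihc := ih (d+1) c (by omega)
          rw [if_pos (by omega), Nat.add_sub_cancel] at ihc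
          simpa using ihc.const_mul_left (((c:ℝ)+1)/(k+1))
      · -- ((d+1)/(k+1)) * Phi d b  =O  B^{k+1} log^d
        have ihdb := ih d b (by omega)
        have hdiff : (fun B : ℝ => Phi k d b B
            - (b.factorial : ℝ) * B ^ (k+1) * Real.log B ^ d / (k+1)^(b+1))
            =O[atTop] fun B : ℝ => B ^ (k+1) * Real.log B ^ d := by
          by_cases hd : 1 ≤ d
          · rw [if_pos hd] at ihdb
            exact ihdb.trans ((isBigO_refl (fun B : ℝ => B ^ (k+1)) atTop).mul
              (log_pow_isBigO (Nat.sub_le d 1)))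
          · have hd0 : d = 0 := by omega
            subst hd0
            rw [if_neg (by omega)] at ihdb
            refine ihdb.trans ?_
            simpa using log_pow_isBigO_rpow b hK
        have hM : (fun B : ℝ => (b.factorial : ℝ) * B ^ (k+1) * Real.log B ^ d / (k+1)^(b+1))
            =O[atTop] fun B : ℝ => B ^ (k+1) * Real.log B ^ d := by
          have := (isBigO_refl (fun B : ℝ => B ^ (k+1) * Real.log B ^ d) atTop).const_mul_left
            ((b.factorial : ℝ)/(k+1)^(b+1))
          exact this.congr_left fun B => by ring
        have := (hdiff.add hM).const_mul_left (((d:ℝ)+1)/(k+1))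
        exact this.congr_left fun B => by ring

end PhiAux

/-- For real `k > -1` and nonnegative integers `β₁, β₂`, the integral
`Φ_k(B,β₁,β₂) = ∫_1^B u^k log(u)^β₁ log(B/u)^β₂ du` satisfies
`Φ_k(B,β₁,β₂) = β₂! B^(k+1) log(B)^β₁/(k+1)^(β₂+1) + O(f(B))` as `B → ∞`, where
`f(B) = B^(k+1) log(B)^(β₁-1)` if `β₁ ≥ 1` and `f(B) = log(B)^β₂` if `β₁ = 0`. -/
theorem Phi_asymptotic
    (k : ℝ) (hk : -1 < k) (β₁ β₂ : ℕ) :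
    (fun B : ℝ =>
        (∫ u in (1:ℝ)..B, u ^ k * Real.log u ^ β₁ * Real.log (B / u) ^ β₂)
          - (β₂.factorial : ℝ) * B ^ (k + 1) * Real.log B ^ β₁ / (k + 1) ^ (β₂ + 1))
      =O[atTop]
    (if 1 ≤ β₁ then (fun B : ℝ => B ^ (k + 1) * Real.log B ^ (β₁ - 1))
      else (fun B : ℝ => Real.log B ^ β₂)) := by
  have hEq : (fun B : ℝ =>
      (∫ u in (1:ℝ)..B, u ^ k * Real.log u ^ β₁ * Real.log (B / u) ^ β₂)
        - (β₂.factorial : ℝ) * B ^ (k + 1) * Real.log B ^ β₁ / (k + 1) ^ (β₂ + 1))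
      =ᶠ[atTop] (fun B : ℝ => PhiAux.Phi k β₁ β₂ B
        - (β₂.factorial : ℝ) * B ^ (k + 1) * Real.log B ^ β₁ / (k + 1) ^ (β₂ + 1)) := by
    filter_upwards [eventually_ge_atTop (1:ℝ)] with B hB
    congr 1
    rw [PhiAux.Phi]
    apply intervalIntegral.integral_congr
    intro u hu
    rw [Set.uIcc_of_le hB] at hu
    have hu0 : (0:ℝ) < u := lt_of_lt_of_le zero_lt_one hu.1
    have hB0 : (0:ℝ) < B := lt_of_lt_of_le zero_lt_one hB
    simp only [PhiAux.f]
    rw [Real.log_div hB0.ne' hu0.ne']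
  exact hEq.trans_isBigO (PhiAux.diff_isBigO hk (β₁ + β₂) β₁ β₂ le_rfl)
end
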